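/- Let B be a C*-algebra, E a Hilbert B-module, and K a closed ternary ideal of E. Then x·⟨y,k⟩ ∈ K for all x, y ∈ E and k ∈ K, and k·⟨x,y⟩ ∈ K for all x, y ∈ E and k ∈ K. -/

import Mathlib

/-!
For `k ∈ K` put `a = ⟪k, k⟫` and `c_ε = a (a² + ε)⁻¹ a`, computed by the continuous functional
calculus. Then `‖k c_ε - k‖² = ‖a (1 - c_ε)²‖ ≤ √ε`, so `k c_ε → k` as `ε → 0⁺`. Writing
`c_ε = d a = a d` with `d = a (a² + ε)⁻¹`, the approximants `x ⟪y, k c_ε⟫ = (x ⟪y, k⟫ d) ⟪k, k⟫` and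
`k c_ε b = k ⟪k, k (d b)⟫` (any `b ∈ B`) lie in `K` by the ternary ideal property, and `K` is closed.
-/

open scoped RightActions

/-- The closed linear span of a subset of a topological `ℂ`-module. -/
noncomputable def clSpan {M : Type*} [AddCommMonoid M] [Module ℂ M] [TopologicalSpace M]
    (S : Set M) : Set M :=
  closure (Submodule.span ℂ S : Set M)

/-- A subset is a (complex) linear subspace. -/
def IsLinearSubspace {M : Type*} [AddCommMonoid M] [Module ℂ M] (K : Set M) : Prop :=
  (0 : M) ∈ K ∧ (∀ x ∈ K, ∀ y ∈ K, x + y ∈ K) ∧ ∀ (c : ℂ), ∀ x ∈ K, c • x ∈ K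

/-- A closed two-sided ideal of a C*-algebra `B`. -/
structure IsClosedTwoSidedIdeal {B : Type*} [NonUnitalCStarAlgebra B] (I : Set B) : Prop where
  isClosed : IsClosed I
  subspace : IsLinearSubspace I
  mul_mem_left : ∀ (b : B), ∀ a ∈ I, b * a ∈ I
  mul_mem_right : ∀ (b : B), ∀ a ∈ I, a * b ∈ I

/-- The Hilbert C⋆-module class as Mathlib stated it in December 2024 (right `A`-action through
`Aᵐᵒᵖ`); Mathlib's current `CStarModule` uses a left action instead. -/
class CStarModuleRight (A E : Type*) [NonUnitalSemiring A] [StarRing A]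
    [Module ℂ A] [AddCommGroup E] [Module ℂ E] [PartialOrder A] [SMul Aᵐᵒᵖ E] [Norm A] [Norm E]
    extends Inner A E where
  inner_add_right {x} {y} {z} : inner x (y + z) = inner x y + inner x z
  inner_self_nonneg {x} : 0 ≤ inner x x
  inner_self {x} : inner x x = 0 ↔ x = 0
  inner_op_smul_right {a : A} {x y : E} : inner x (y <• a) = inner x y * a
  inner_smul_right_complex {z : ℂ} {x} {y} : inner x (z • y) = z • inner x y
  star_inner x y : star (inner x y) = inner y x
  norm_eq_sqrt_norm_inner_self x : ‖x‖ = √‖inner x x‖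

section HilbertModule

variable (B : Type*) [NonUnitalCStarAlgebra B] [PartialOrder B] [StarOrderedRing B]
variable {E : Type*} [NormedAddCommGroup E] [NormedSpace ℂ E] [SMul Bᵐᵒᵖ E] [CStarModuleRight B E]

/-- `K ⊆ E` is an *ideal submodule* if it is the closed linear span of
`{x <• i : x ∈ E, i ∈ I}` for some closed two-sided ideal `I` of `B`. -/
def IsIdealSubmodule (K : Set E) : Prop :=
  ∃ I : Set B, IsClosedTwoSidedIdeal I ∧
    K = clSpan {z : E | ∃ x : E, ∃ i ∈ I, z = x <• i}

/-- A *ternary ideal* of a Hilbert `B`-module `E`: a linear subspace `K` with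
`x <• ⟪k, y⟫ ∈ K` for all `x y ∈ E` and `k ∈ K`. -/
def IsTernaryIdeal (K : Set E) : Prop :=
  IsLinearSubspace K ∧ ∀ (x y : E), ∀ k ∈ K, x <• (inner B k y : B) ∈ K

/-- `B_S`: the closed linear span in `B` of all inner products of elements of `S`. -/
noncomputable def rangeIdeal (S : Set E) : Set B :=
  clSpan {b : B | ∃ k ∈ S, ∃ k' ∈ S, b = (inner B k k' : B)}

/-- The orthogonal complement of a subset of a Hilbert `B`-module. -/
def perp (S : Set E) : Set E :=
  {x : E | ∀ s ∈ S, (inner B x s : B) = 0}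

end HilbertModule

section RegularizedInverse

variable {B : Type*} [NonUnitalCStarAlgebra B]

/-- `a (a² + ε)⁻¹`, written as a function vanishing at `0` so that the non-unital calculus applies. -/
noncomputable def regularizedInv (a : B) (ε : ℝ) : B := cfcₙ (fun t : ℝ => t / (t ^ 2 + ε)) a

lemma regularizedInv_commute_self (a : B) (ε : ℝ) : Commute (regularizedInv a ε) a :=
  (Commute.refl a).cfcₙ_real _

lemma mul_regularizedInv_eq_cfcₙ {a : B} (ha : IsSelfAdjoint a) {ε : ℝ} (hε : 0 < ε) :
    a * regularizedInv a ε = cfcₙ (fun t : ℝ => t ^ 2 / (t ^ 2 + ε)) a := by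
  have hf : Continuous fun t : ℝ => t / (t ^ 2 + ε) :=
    continuous_id.div (by fun_prop) fun t => by positivity
  nth_rw 1 [regularizedInv, ← cfcₙ_id' ℝ a, ← cfcₙ_mul _ _ a (hg := hf.continuousOn)]
  exact cfcₙ_congr fun t _ => by ring

lemma isSelfAdjoint_mul_regularizedInv {a : B} (ha : IsSelfAdjoint a) {ε : ℝ} (hε : 0 < ε) :
    IsSelfAdjoint (a * regularizedInv a ε) := by
  rw [mul_regularizedInv_eq_cfcₙ ha hε]
  exact cfcₙ_predicate _ a

lemma abs_mul_div_sq_le {ε : ℝ} (hε : 0 < ε) (t : ℝ) : |t * (ε / (t ^ 2 + ε)) ^ 2| ≤ √ε := by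
  obtain ⟨s, hs, rfl⟩ : ∃ s, 0 < s ∧ ε = s ^ 2 :=
    ⟨√ε, Real.sqrt_pos.2 hε, (Real.sq_sqrt hε.le).symm⟩
  have hd : 0 < t ^ 2 + s ^ 2 := by positivity
  have amgm : 2 * |t| * s ≤ t ^ 2 + s ^ 2 := by nlinarith [sq_nonneg (|t| - s), sq_abs t]
  rw [Real.sqrt_sq hs.le, abs_mul, abs_pow, abs_div, abs_of_pos hd, abs_of_pos hε, div_pow,
    mul_div_assoc', div_le_iff₀ (by positivity)]
  nlinarith [mul_le_mul amgm (le_add_of_nonneg_left (sq_nonneg t) : s ^ 2 ≤ t ^ 2 + s ^ 2)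
    (by positivity) hd.le, abs_nonneg t]

lemma norm_sub_mul_regularizedInv_le {a c : B} (ha : IsSelfAdjoint a) {ε : ℝ} (hε : 0 < ε)
    (hc : c = a * regularizedInv a ε) : ‖c * a * c - c * a - a * c + a‖ ≤ √ε := by
  set g : ℝ → ℝ := fun t => t ^ 2 / (t ^ 2 + ε)
  have hg : Continuous g := (continuous_pow 2).div (by fun_prop) fun t => by positivity
  rw [mul_regularizedInv_eq_cfcₙ ha hε] at hc
  have key : cfcₙ (fun t : ℝ => t * (ε / (t ^ 2 + ε)) ^ 2) a = c * a * c - c * a - a * c + a := by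
    rw [cfcₙ_congr (g := fun t => g t * t * g t - g t * t - t * g t + t) fun t _ => ?eq,
      cfcₙ_add _ _ a, cfcₙ_sub _ _ a, cfcₙ_sub _ _ a, cfcₙ_mul _ _ a, cfcₙ_mul _ _ a,
      cfcₙ_mul _ _ a, cfcₙ_id' ℝ a, hc]
    case eq =>
      have hd : t ^ 2 + ε ≠ 0 := by positivity
      simp only [g]
      field_simp
      ring
  rw [← key]
  exact norm_cfcₙ_le fun t _ => abs_mul_div_sq_le hε t

end RegularizedInverse

namespace CStarModuleRight

variable {B : Type*} [NonUnitalCStarAlgebra B] [PartialOrder B]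
variable {E : Type*} [NormedAddCommGroup E] [NormedSpace ℂ E] [SMul Bᵐᵒᵖ E] [CStarModuleRight B E]

open MulOpposite Filter Topology

/-- Over `Bᵐᵒᵖ` the right action becomes the left action of Mathlib's `CStarModule`, whose
Cauchy–Schwarz inequality and continuity of the inner product we then inherit. -/
instance toCStarModuleMulOpposite : CStarModule Bᵐᵒᵖ E where
  inner x y := op (inner B x y)
  inner_add_right := congrArg op inner_add_right
  inner_self_nonneg := inner_self_nonneg (A := B)
  inner_self := op_eq_zero_iff _ |>.trans inner_self
  inner_op_smul_right := congrArg op inner_op_smul_right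
  inner_smul_right_complex := congrArg op inner_smul_right_complex
  star_inner x y := congrArg op (star_inner x y)
  norm_eq_sqrt_norm_inner_self x := norm_eq_sqrt_norm_inner_self (A := B) x

@[simp] lemma inner_sub_right (x y z : E) : inner B x (y - z) = inner B x y - inner B x z :=
  congrArg unop (CStarModule.inner_sub_right (A := Bᵐᵒᵖ) (x := x) (y := y) (z := z))

@[simp] lemma inner_sub_left (x y z : E) : inner B (x - y) z = inner B x z - inner B y z :=
  congrArg unop (CStarModule.inner_sub_left (A := Bᵐᵒᵖ) (x := x) (y := y) (z := z))

@[simp] lemma inner_op_smul_left (x y : E) (b : B) : inner B (x <• b) y = star b * inner B x y :=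
  congrArg unop (CStarModule.inner_op_smul_left (A := Bᵐᵒᵖ) (a := op b) (x := x) (y := y))

variable (B) in
lemma norm_sq_eq (x : E) : ‖x‖ ^ 2 = ‖inner B x x‖ := CStarModule.norm_sq_eq Bᵐᵒᵖ (x := x)

variable (B) in
lemma ext_inner_left {u v : E} (h : ∀ w, inner B w u = inner B w v) : u = v := by
  rw [← sub_eq_zero, ← inner_self (A := B), inner_sub_right, h, sub_self]

lemma op_smul_mul (x : E) (b c : B) : x <• (b * c) = x <• b <• c :=
  ext_inner_left B fun w => by simp only [inner_op_smul_right, mul_assoc]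

lemma op_smul_sub (x : E) (b c : B) : x <• (b - c) = x <• b - x <• c :=
  ext_inner_left B fun w => by simp only [inner_op_smul_right, inner_sub_right, mul_sub]

lemma sub_op_smul (x y : E) (b : B) : (x - y) <• b = x <• b - y <• b :=
  ext_inner_left B fun w => by simp only [inner_op_smul_right, inner_sub_right, sub_mul]

lemma norm_op_smul_le (x : E) (b : B) : ‖x <• b‖ ≤ ‖x‖ * ‖b‖ := by
  refine le_of_sq_le_sq ?_ (by positivity)
  calc ‖x <• b‖ ^ 2 = ‖star b * inner B x x * b‖ := by
        rw [norm_sq_eq B, inner_op_smul_left, inner_op_smul_right (A := B), mul_assoc]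
    _ ≤ ‖b‖ * ‖inner B x x‖ * ‖b‖ := by
        refine (norm_mul_le _ _).trans (mul_le_mul_of_nonneg_right ?_ (norm_nonneg b))
        exact (norm_mul_le _ _).trans_eq (by rw [norm_star])
    _ = (‖x‖ * ‖b‖) ^ 2 := by rw [← norm_sq_eq B]; ring

lemma continuous_op_smul_const (b : B) : Continuous fun x : E => x <• b :=
  LipschitzWith.continuous (K := ‖b‖₊) <| .of_dist_le_mul fun x y => by
    rw [dist_eq_norm, dist_eq_norm, ← sub_op_smul, coe_nnnorm, mul_comm]
    exact norm_op_smul_le _ _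

lemma continuous_const_op_smul (x : E) : Continuous fun b : B => x <• b :=
  LipschitzWith.continuous (K := ‖x‖₊) <| .of_dist_le_mul fun b c => by
    rw [dist_eq_norm, dist_eq_norm, ← op_smul_sub, coe_nnnorm]
    exact norm_op_smul_le _ _

lemma norm_op_smul_mul_regularizedInv_sub_sq_le (k : E) {ε : ℝ} (hε : 0 < ε) :
    ‖k <• (inner B k k * regularizedInv (inner B k k) ε) - k‖ ^ 2 ≤ √ε := by
  have ha : IsSelfAdjoint (inner B k k) := star_inner k k
  have hsa := isSelfAdjoint_mul_regularizedInv ha hε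
  generalize hc : inner B k k * regularizedInv (inner B k k) ε = c at hsa ⊢
  rw [norm_sq_eq B]
  simp only [inner_sub_left, inner_sub_right, inner_op_smul_left, inner_op_smul_right,
    hsa.star_eq]
  convert norm_sub_mul_regularizedInv_le ha hε hc.symm using 2
  noncomm_ring

variable (B) in
lemma tendsto_op_smul_mul_regularizedInv (k : E) :
    Tendsto (fun ε => k <• (inner B k k * regularizedInv (inner B k k) ε)) (𝓝[>] 0) (𝓝 k) := by
  rw [tendsto_iff_norm_sub_tendsto_zero]
  have hbound : Tendsto (fun ε : ℝ => √(√ε)) (𝓝[>] 0) (𝓝 0) :=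
    (Real.continuous_sqrt.comp Real.continuous_sqrt).tendsto' 0 0 (by simp) |>.mono_left
      nhdsWithin_le_nhds
  refine squeeze_zero' (.of_forall fun _ => norm_nonneg _) ?_ hbound
  filter_upwards [self_mem_nhdsWithin] with ε hε
  exact Real.le_sqrt_of_sq_le (norm_op_smul_mul_regularizedInv_sub_sq_le k hε)

variable (B) in
lemma continuous_inner_right [StarOrderedRing B] (x : E) : Continuous (inner B x : E → B) :=
  continuous_unop.comp ((CStarModule.continuous_inner (A := Bᵐᵒᵖ)).comp (.prodMk_right x))

end CStarModuleRight

namespace IsTernaryIdeal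

variable {B : Type*} [NonUnitalCStarAlgebra B] [PartialOrder B]
variable {E : Type*} [NormedAddCommGroup E] [NormedSpace ℂ E] [SMul Bᵐᵒᵖ E] [CStarModuleRight B E]

open CStarModuleRight

lemma op_smul_mem {K : Set E} (hK : IsTernaryIdeal B K) (hcl : IsClosed K) {k : E} (hk : k ∈ K)
    (b : B) : k <• b ∈ K := by
  refine hcl.mem_of_tendsto ((continuous_op_smul_const b).tendsto k |>.comp
    (tendsto_op_smul_mul_regularizedInv B k)) (.of_forall fun ε => ?_)
  rw [Function.comp_apply, ← CStarModuleRight.op_smul_mul, mul_assoc,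
    ← CStarModuleRight.inner_op_smul_right (A := B)]
  exact hK.2 k _ k hk

lemma op_smul_inner_mem [StarOrderedRing B] {K : Set E} (hK : IsTernaryIdeal B K)
    (hcl : IsClosed K) (x y : E) {k : E} (hk : k ∈ K) : x <• inner B y k ∈ K := by
  refine hcl.mem_of_tendsto (((continuous_const_op_smul x).comp
    (continuous_inner_right B y)).tendsto k |>.comp (tendsto_op_smul_mul_regularizedInv B k))
    (.of_forall fun ε => ?_)
  rw [Function.comp_apply, Function.comp_apply, CStarModuleRight.inner_op_smul_right (A := B),
    ← (regularizedInv_commute_self _ ε).eq, ← mul_assoc, CStarModuleRight.op_smul_mul]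
  exact hK.2 _ k k hk

end IsTernaryIdeal

theorem closed_ternaryIdeal_absorbs_general
    {B : Type*} [NonUnitalCStarAlgebra B] [PartialOrder B] [StarOrderedRing B]
    {E : Type*} [NormedAddCommGroup E] [NormedSpace ℂ E] [SMul Bᵐᵒᵖ E]
    [CStarModuleRight B E] (K : Set E) (hcl : IsClosed K) (hK : IsTernaryIdeal B K) :
    (∀ (x y : E), ∀ k ∈ K, x <• (inner B y k : B) ∈ K) ∧
    (∀ (x y : E), ∀ k ∈ K, k <• (inner B x y : B) ∈ K) :=
  ⟨fun x y _ hk => hK.op_smul_inner_mem hcl x y hk, fun _ _ _ hk => hK.op_smul_mem hcl hk _⟩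

/-- a closed ternary ideal `K` satisfies `E⟨E,K⟩ ⊆ K` and `K⟨E,E⟩ ⊆ K`. -/
theorem closed_ternaryIdeal_absorbs
    {B : Type*} [NonUnitalCStarAlgebra B] [PartialOrder B] [StarOrderedRing B]
    {E : Type*} [NormedAddCommGroup E] [NormedSpace ℂ E] [SMul Bᵐᵒᵖ E]
    [CStarModuleRight B E] [CompleteSpace E] (K : Set E) (hcl : IsClosed K) (hK : IsTernaryIdeal B K) :
    (∀ (x y : E), ∀ k ∈ K, x <• (inner B y k : B) ∈ K) ∧
    (∀ (x y : E), ∀ k ∈ K, k <• (inner B x y : B) ∈ K) :=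
  closed_ternaryIdeal_absorbs_general K hcl hK
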